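/- Let T > 0 and let y, z : [0,T] × ℝ⁶ → ℂ be measurable, with y(t,·) and z(t,·) differentiable on ℝ⁶ for almost every t. Then ∫₀ᵀ ‖z(t)·conj(y(t))‖_{W^{1,2}(ℝ⁶)} dt ≤ ‖z‖_{L²(0,T;L⁶(ℝ⁶))} · ‖y‖_{L²(0,T;W^{1,3}(ℝ⁶))} + ‖z‖_{L²(0,T;W^{1,3}(ℝ⁶))} · ‖y‖_{L²(0,T;L⁶(ℝ⁶))}, as an inequality of extended nonnegative reals, where ‖f‖_{L²(0,T;W^{1,p})} := (∫₀ᵀ ‖f(t)‖_{W^{1,p}}² dt)^{1/2}. (Hölder part of the bilinear estimate used in the H¹ local theory for d = 6.) -/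

import Mathlib

open MeasureTheory Filter
open scoped ENNReal

/-- Sobolev `W^{1,p}` norm of a function `f : ℝ⁶ → ℂ`:
`‖f‖_{W^{1,p}} = ‖f‖_{L^p} + ‖∇f‖_{L^p}`, valued in `[0,∞]`. -/
noncomputable def W1Norm6 (p : ℝ≥0∞) (f : (Fin 6 → ℝ) → ℂ) : ℝ≥0∞ :=
  eLpNorm f p (volume : Measure (Fin 6 → ℝ))
    + eLpNorm (fderiv ℝ f) p (volume : Measure (Fin 6 → ℝ))

/-!
At each fixed time the Leibniz rule `∇(z ȳ) = z ∇ȳ + ȳ ∇z` and Hölder's inequality with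
`1/2 = 1/6 + 1/3` give `‖z ȳ‖_{W^{1,2}} ≤ ‖z‖_{L⁶} ‖y‖_{W^{1,3}} + ‖z‖_{W^{1,3}} ‖y‖_{L⁶}`, since
conjugation preserves all the norms involved; Cauchy–Schwarz in time then concludes.
Cauchy–Schwarz needs the time integrands to be a.e. measurable. For `‖∇y(t)‖_{L³}` this holds
because, for a.e. `t`, `∇y(t, ξ)` is the limit of the jointly measurable difference quotients
`n (y(t, ξ + eᵢ / n) - y(t, ξ))` along a basis `(eᵢ)`.
-/

open Topology ComplexConjugate Module

section Derivative

variable {E 𝕜 : Type*} [NormedAddCommGroup E] [NormedSpace ℝ E] [RCLike 𝕜]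

theorem norm_fderiv_conj (g : E → 𝕜) (x : E) :
    ‖fderiv ℝ (fun ξ => conj (g ξ)) x‖ = ‖fderiv ℝ g x‖ := by
  have h := RCLike.conjLIE.comp_fderiv (f := g) (x := x)
  rw [RCLike.conjLIE_apply] at h
  rw [← Function.comp_def, h]
  exact RCLike.conjLIE.toLinearIsometry.norm_toContinuousLinearMap_comp

variable [FiniteDimensional ℝ E] [MeasurableSpace E] [BorelSpace E] {μ : Measure E}
  {p q r : ℝ≥0∞} [ENNReal.HolderTriple p q r]

theorem eLpNorm_smul_fderiv_le {f g : E → 𝕜} (hf : Continuous f) :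
    eLpNorm (f • fderiv ℝ g) r μ ≤ eLpNorm f p μ * eLpNorm (fderiv ℝ g) q μ :=
  eLpNorm_smul_le_mul_eLpNorm (measurable_fderiv ℝ g).aestronglyMeasurable
    hf.aestronglyMeasurable

theorem eLpNorm_fderiv_mul_le (hr : 1 ≤ r) {f g : E → 𝕜} (hf : Differentiable ℝ f)
    (hg : Differentiable ℝ g) :
    eLpNorm (fderiv ℝ (fun x => f x * g x)) r μ ≤
      eLpNorm f p μ * eLpNorm (fderiv ℝ g) q μ + eLpNorm g p μ * eLpNorm (fderiv ℝ f) q μ := by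
  have hprod : fderiv ℝ (fun x => f x * g x) = f • fderiv ℝ g + g • fderiv ℝ f :=
    funext fun x => fderiv_mul (hf x) (hg x)
  rw [hprod]
  exact (eLpNorm_add_le
      (hf.continuous.measurable.smul (measurable_fderiv ℝ g)).aestronglyMeasurable
      (hg.continuous.measurable.smul (measurable_fderiv ℝ f)).aestronglyMeasurable hr).trans
    (add_le_add (eLpNorm_smul_fderiv_le hf.continuous) (eLpNorm_smul_fderiv_le hg.continuous))

end Derivative

section Sobolev

theorem W1Norm6_conj (p : ℝ≥0∞) (g : (Fin 6 → ℝ) → ℂ) :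
    W1Norm6 p (fun ξ => conj (g ξ)) = W1Norm6 p g := by
  unfold W1Norm6
  rw [eLpNorm_congr_norm_ae (.of_forall (norm_fderiv_conj g))]
  congr 1
  exact eLpNorm_star

variable {p q r : ℝ≥0∞} [ENNReal.HolderTriple p q r]

theorem W1Norm6_mul_le (hr : 1 ≤ r) {f g : (Fin 6 → ℝ) → ℂ} (hf : Differentiable ℝ f)
    (hg : Differentiable ℝ g) :
    W1Norm6 r (fun ξ => f ξ * g ξ)
      ≤ eLpNorm f p volume * W1Norm6 q g + W1Norm6 q f * eLpNorm g p volume := by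
  have hL : eLpNorm (fun ξ => f ξ * g ξ) r volume ≤ eLpNorm f p volume * eLpNorm g q volume :=
    eLpNorm_smul_le_mul_eLpNorm (f := g) (φ := f) hg.continuous.aestronglyMeasurable
      hf.continuous.aestronglyMeasurable
  have hD := eLpNorm_fderiv_mul_le (μ := volume) (p := p) (q := q) hr hf hg
  unfold W1Norm6
  calc _ ≤ _ := add_le_add hL hD
    _ ≤ _ := by
      rw [mul_add, add_mul, ← add_assoc, mul_comm (eLpNorm g p volume)]
      exact add_le_add le_rfl le_add_self

instance : ENNReal.HolderTriple 6 3 2 :=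
  ⟨by
    rw [← ENNReal.toReal_eq_toReal_iff' (by simp) (by simp),
      ENNReal.toReal_add (by simp) (by simp)]
    norm_num⟩

theorem W1Norm6_mul_conj_le {f g : (Fin 6 → ℝ) → ℂ} (hf : Differentiable ℝ f)
    (hg : Differentiable ℝ g) :
    W1Norm6 2 (fun ξ => f ξ * conj (g ξ))
      ≤ eLpNorm f 6 volume * W1Norm6 3 g + W1Norm6 3 f * eLpNorm g 6 volume := by
  have hg' : Differentiable ℝ (fun ξ => conj (g ξ)) :=
    (RCLike.conjLIE (K := ℂ)).differentiable.comp hg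
  calc _ ≤ eLpNorm f 6 volume * W1Norm6 3 (fun ξ => conj (g ξ))
        + W1Norm6 3 f * eLpNorm (fun ξ => conj (g ξ)) 6 volume :=
        W1Norm6_mul_le (by norm_num) hf hg'
    _ = _ := by rw [W1Norm6_conj]; congr 2; exact eLpNorm_star

end Sobolev

section Measurability

variable {α β : Type*} [MeasurableSpace α] [MeasurableSpace β] {μ : Measure α}

theorem MeasureTheory.AEStronglyMeasurable.aemeasurable_eLpNorm_section {F : Type*}
    [NormedAddCommGroup F] {ν : Measure β} [SFinite ν] {w : α → β → F} {p : ℝ≥0∞}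
    (hw : AEStronglyMeasurable (Function.uncurry w) (μ.prod ν)) (hp0 : p ≠ 0) (hp : p ≠ ∞) :
    AEMeasurable (fun t => eLpNorm (w t) p ν) μ := by
  simp_rw [eLpNorm_eq_lintegral_rpow_enorm_toReal hp0 hp]
  exact (hw.enorm.pow_const _).lintegral_prod_right.pow_const _

variable {E F : Type*} [NormedAddCommGroup E] [NormedSpace ℝ E] [FiniteDimensional ℝ E]
  [NormedAddCommGroup F] [NormedSpace ℝ F]

variable (E F) in
noncomputable def clmEquivFinBasis : (E →L[ℝ] F) ≃L[ℝ] (Fin (finrank ℝ E) → F) :=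
  ((finBasis ℝ E).equivFunL.arrowCongr (ContinuousLinearEquiv.refl ℝ F)).trans
    (ContinuousLinearEquiv.piRing _)

theorem clmEquivFinBasis_apply (L : E →L[ℝ] F) (i : Fin (finrank ℝ E)) :
    clmEquivFinBasis E F L i = L (finBasis ℝ E i) :=
  congrArg L (Basis.equivFun_symm_single _ i)

variable [MeasurableSpace E] [BorelSpace E] {ν : Measure E}
  [MeasurableSpace F] [BorelSpace F] [SecondCountableTopology F]

theorem aestronglyMeasurable_fderiv_uncurry {y : α → E → F}
    (hy : Measurable (Function.uncurry y)) (hdiff : ∀ᵐ t ∂μ, Differentiable ℝ (y t)) :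
    AEStronglyMeasurable (fun q : α × E => fderiv ℝ (y q.1) q.2) (μ.prod ν) := by
  let e := clmEquivFinBasis E F
  let quot : ℕ → α × E → Fin (finrank ℝ E) → F := fun n q i =>
    (n : ℝ) • (y q.1 (q.2 + (n : ℝ)⁻¹ • finBasis ℝ E i) - y q.1 q.2)
  have hquot (n : ℕ) : Measurable (quot n) := measurable_pi_lambda _ fun i =>
    ((hy.comp (measurable_fst.prodMk (measurable_snd.add_const _))).sub hy).const_smul _
  have hlim : ∀ᵐ q ∂(μ.prod ν),
      Tendsto (fun n => e.symm (quot n q)) atTop (𝓝 (fderiv ℝ (y q.1) q.2)) := by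
    filter_upwards [Measure.quasiMeasurePreserving_fst.ae hdiff] with q hq
    rw [← e.symm_apply_apply (fderiv ℝ (y q.1) q.2)]
    refine (e.symm.continuous.tendsto _).comp (tendsto_pi_nhds.2 fun i => ?_)
    rw [clmEquivFinBasis_apply]
    exact (hq q.2).hasFDerivAt.lim _ (by simpa using tendsto_natCast_atTop_atTop)
  exact aestronglyMeasurable_of_tendsto_ae atTop
    (fun n => (e.symm.continuous.comp_stronglyMeasurable
      (hquot n).stronglyMeasurable).aestronglyMeasurable) hlim

end Measurability

theorem aemeasurable_W1Norm6 {α : Type*} [MeasurableSpace α] {μ : Measure α} {p : ℝ≥0∞}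
    (hp0 : p ≠ 0) (hp : p ≠ ∞) {y : α → (Fin 6 → ℝ) → ℂ} (hy : Measurable (Function.uncurry y))
    (hdiff : ∀ᵐ t ∂μ, Differentiable ℝ (y t)) :
    AEMeasurable (fun t => W1Norm6 p (y t)) μ :=
  (hy.aestronglyMeasurable.aemeasurable_eLpNorm_section (ν := volume) hp0 hp).add
    ((aestronglyMeasurable_fderiv_uncurry hy hdiff).aemeasurable_eLpNorm_section hp0 hp)

theorem bilinear_estimate_H1_d6_general (T : ℝ) (y z : ℝ → (Fin 6 → ℝ) → ℂ)
    (hy : Measurable (Function.uncurry y)) (hz : Measurable (Function.uncurry z))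
    (hdiff : ∀ᵐ t ∂((volume : Measure ℝ).restrict (Set.Icc (0 : ℝ) T)),
      Differentiable ℝ (y t) ∧ Differentiable ℝ (z t)) :
    (∫⁻ t in Set.Icc (0 : ℝ) T,
        W1Norm6 2 (fun ξ => z t ξ * (starRingEnd ℂ) (y t ξ)))
      ≤ (∫⁻ t in Set.Icc (0 : ℝ) T,
            eLpNorm (z t) 6 (volume : Measure (Fin 6 → ℝ)) ^ ((2 : ℝ))) ^ ((1 : ℝ) / 2)
          * (∫⁻ t in Set.Icc (0 : ℝ) T, W1Norm6 3 (y t) ^ ((2 : ℝ))) ^ ((1 : ℝ) / 2)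
        + (∫⁻ t in Set.Icc (0 : ℝ) T, W1Norm6 3 (z t) ^ ((2 : ℝ))) ^ ((1 : ℝ) / 2)
          * (∫⁻ t in Set.Icc (0 : ℝ) T,
              eLpNorm (y t) 6 (volume : Measure (Fin 6 → ℝ)) ^ ((2 : ℝ))) ^ ((1 : ℝ) / 2) := by
  set μ := (volume : Measure ℝ).restrict (Set.Icc (0 : ℝ) T)
  have hL6 {w : ℝ → (Fin 6 → ℝ) → ℂ} (hw : Measurable (Function.uncurry w)) :
      AEMeasurable (fun t => eLpNorm (w t) 6 volume) μ :=
    hw.aestronglyMeasurable.aemeasurable_eLpNorm_section (by norm_num) (by norm_num)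
  have hy3 := aemeasurable_W1Norm6 (p := 3) (by norm_num) (by norm_num) hy
    (hdiff.mono fun _ h => h.1)
  have hz3 := aemeasurable_W1Norm6 (p := 3) (by norm_num) (by norm_num) hz
    (hdiff.mono fun _ h => h.2)
  calc _ ≤ ∫⁻ t, (eLpNorm (z t) 6 volume * W1Norm6 3 (y t)
          + W1Norm6 3 (z t) * eLpNorm (y t) 6 volume) ∂μ :=
        lintegral_mono_ae (hdiff.mono fun t h => W1Norm6_mul_conj_le h.2 h.1)
    _ = _ := lintegral_add_left' ((hL6 hz).mul hy3) _
    _ ≤ _ := add_le_add (ENNReal.lintegral_mul_le_Lp_mul_Lq _ .two_two (hL6 hz) hy3)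
        (ENNReal.lintegral_mul_le_Lp_mul_Lq _ .two_two hz3 (hL6 hy))

/-- Hölder part of the bilinear estimate used in the `H¹` local theory for `d = 6`:
`∫₀ᵀ ‖z(t) conj(y(t))‖_{W^{1,2}} dt ≤ ‖z‖_{L²(0,T;L⁶)} ‖y‖_{L²(0,T;W^{1,3})}
  + ‖z‖_{L²(0,T;W^{1,3})} ‖y‖_{L²(0,T;L⁶)}`. -/
theorem bilinear_estimate_H1_d6 (T : ℝ) (hT : 0 < T) (y z : ℝ → (Fin 6 → ℝ) → ℂ)
    (hy : Measurable (Function.uncurry y)) (hz : Measurable (Function.uncurry z))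
    (hdiff : ∀ᵐ t ∂((volume : Measure ℝ).restrict (Set.Icc (0 : ℝ) T)),
      Differentiable ℝ (y t) ∧ Differentiable ℝ (z t)) :
    (∫⁻ t in Set.Icc (0 : ℝ) T,
        W1Norm6 2 (fun ξ => z t ξ * (starRingEnd ℂ) (y t ξ)))
      ≤ (∫⁻ t in Set.Icc (0 : ℝ) T,
            eLpNorm (z t) 6 (volume : Measure (Fin 6 → ℝ)) ^ ((2 : ℝ))) ^ ((1 : ℝ) / 2)
          * (∫⁻ t in Set.Icc (0 : ℝ) T, W1Norm6 3 (y t) ^ ((2 : ℝ))) ^ ((1 : ℝ) / 2)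
        + (∫⁻ t in Set.Icc (0 : ℝ) T, W1Norm6 3 (z t) ^ ((2 : ℝ))) ^ ((1 : ℝ) / 2)
          * (∫⁻ t in Set.Icc (0 : ℝ) T,
              eLpNorm (y t) 6 (volume : Measure (Fin 6 → ℝ)) ^ ((2 : ℝ))) ^ ((1 : ℝ) / 2) :=
  bilinear_estimate_H1_d6_general T y z hy hz hdiff
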